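/- arXiv:2402.13624 — 2 statements merged into one kernel-verified Lean document; each statement's English description precedes it below -/
import Mathlib

section
/- Let D = (A,B,λ) be a temporal bi-clique with |A| = |B|. Then there exists a temporal clique C = (A ⊔ B, λ') such that for every spanner S of C, the set S ∩ (A⊗B) is a bi-spanner of D. -/
/-!
Formalization framework for temporal graphs, temporal paths, spanners,
bi-spanners, and related notions from the paper on temporal spanners of
temporal cliques and bi-cliques.

A temporal graph on vertex type `V` is given by a labeling `lab : Sym2 V → L`
(only values on actual edges matter) together with an edge set
`E : Set (Sym2 V)`.  A temporal path is a nonempty list of vertices whose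
consecutive pairs are edges of the allowed edge set and whose labels are
non-decreasing along the path (non-strict temporal path).
-/

namespace TS

variable {V : Type} {L : Type} [LinearOrder L]

/-- The list of (undirected) edges traversed by a list of vertices. -/
def pathEdges (p : List V) : List (Sym2 V) :=
  (p.zip p.tail).map fun q => s(q.1, q.2)

/-- `p` is a temporal path using only edges from `S`, labelled by `lab`:
nonempty, all edges in `S`, labels non-decreasing along the path. -/
def IsTemporalPath (lab : Sym2 V → L) (S : Set (Sym2 V)) (p : List V) : Prop :=
  p ≠ [] ∧ (∀ e ∈ pathEdges p, e ∈ S) ∧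
    (pathEdges p).Chain' fun e f => lab e ≤ lab f

/-- `u` reaches `v` via a temporal path contained in `S`. -/
def Reaches (lab : Sym2 V → L) (S : Set (Sym2 V)) (u v : V) : Prop :=
  ∃ p : List V, p.head? = some u ∧ p.getLast? = some v ∧ IsTemporalPath lab S p

/-- Edge set of the complete graph on `V`. -/
def cliqueEdges (V : Type) : Set (Sym2 V) := {e | ¬ e.IsDiag}

/-- Edge set `A ⊗ B` of the complete bipartite graph with parts `α` and `β`. -/
def bicliqueEdges (α β : Type) : Set (Sym2 (α ⊕ β)) :=
  {e | ∃ a b, e = s(Sum.inl a, Sum.inr b)}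

/-- `S` is a spanner of the temporal graph with edge set `E`:
`S ⊆ E` and every vertex reaches every other vertex within `S`. -/
def IsSpanner (lab : Sym2 V → L) (E S : Set (Sym2 V)) : Prop :=
  S ⊆ E ∧ ∀ u v : V, Reaches lab S u v

/-- `S` is a bi-spanner of the temporal bi-clique with parts `α`, `β`:
`S ⊆ α ⊗ β` and every `a ∈ α` reaches every `b ∈ β` within `S`. -/
def IsBiSpanner {α β : Type} (lab : Sym2 (α ⊕ β) → L) (S : Set (Sym2 (α ⊕ β))) : Prop :=
  S ⊆ bicliqueEdges α β ∧ ∀ (a : α) (b : β), Reaches lab S (Sum.inl a) (Sum.inr b)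

/-- `σ_cl n`: the minimum number `m` such that every temporal clique on `n`
vertices admits a spanner with at most `m` edges. -/
noncomputable def sigmaCl (n : ℕ) : ℕ :=
  sInf {m | ∀ lab : Sym2 (Fin n) → ℕ, ∃ S : Finset (Sym2 (Fin n)),
    IsSpanner lab (cliqueEdges (Fin n)) (↑S) ∧ S.card ≤ m}

/-- `σ_bc n`: the minimum number `m` such that every temporal bi-clique with
`n` vertices on each side admits a bi-spanner with at most `m` edges. -/
noncomputable def sigmaBc (n : ℕ) : ℕ :=
  sInf {m | ∀ lab : Sym2 (Fin n ⊕ Fin n) → ℕ, ∃ S : Finset (Sym2 (Fin n ⊕ Fin n)),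
    IsBiSpanner lab (↑S) ∧ S.card ≤ m}

/-- `In(v,t)`: vertices reaching `v` via a temporal path (in edge set `E`)
all of whose labels are at most `t`. -/
def InSet (lab : Sym2 V → L) (E : Set (Sym2 V)) (v : V) (t : L) : Set V :=
  {u | ∃ p : List V, p.head? = some u ∧ p.getLast? = some v ∧
    IsTemporalPath lab E p ∧ ∀ e ∈ pathEdges p, lab e ≤ t}

/-- `Out(v,t)`: vertices that `v` reaches via a temporal path (in edge set `E`)
all of whose labels are at least `t`. -/
def OutSet (lab : Sym2 V → L) (E : Set (Sym2 V)) (v : V) (t : L) : Set V :=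
  {w | ∃ p : List V, p.head? = some v ∧ p.getLast? = some w ∧
    IsTemporalPath lab E p ∧ ∀ e ∈ pathEdges p, t ≤ lab e}

/-- `In(e)` for the edge `e = {u,v}`. -/
def InEdge (lab : Sym2 V → L) (E : Set (Sym2 V)) (u v : V) : Set V :=
  InSet lab E u (lab s(u, v)) ∪ InSet lab E v (lab s(u, v))

/-- `Out(e)` for the edge `e = {u,v}`. -/
def OutEdge (lab : Sym2 V → L) (E : Set (Sym2 V)) (u v : V) : Set V :=
  OutSet lab E u (lab s(u, v)) ∪ OutSet lab E v (lab s(u, v))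

variable {α β : Type}

/-- In a bi-clique, `b` is the earliest neighbor `π⁻(a)` of `a ∈ A`. -/
def IsEarliestNbrA (lab : Sym2 (α ⊕ β) → L) (a : α) (b : β) : Prop :=
  ∀ b' : β, lab s(Sum.inl a, Sum.inr b) ≤ lab s(Sum.inl a, Sum.inr b')

/-- In a bi-clique, `a` is the earliest neighbor `π⁻(b)` of `b ∈ B`. -/
def IsEarliestNbrB (lab : Sym2 (α ⊕ β) → L) (b : β) (a : α) : Prop :=
  ∀ a' : α, lab s(Sum.inl a, Sum.inr b) ≤ lab s(Sum.inl a', Sum.inr b)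

/-- In a bi-clique, `b` is the latest neighbor `π⁺(a)` of `a ∈ A`. -/
def IsLatestNbrA (lab : Sym2 (α ⊕ β) → L) (a : α) (b : β) : Prop :=
  ∀ b' : β, lab s(Sum.inl a, Sum.inr b') ≤ lab s(Sum.inl a, Sum.inr b)

/-- In a bi-clique, `a` is the latest neighbor `π⁺(b)` of `b ∈ B`. -/
def IsLatestNbrB (lab : Sym2 (α ⊕ β) → L) (b : β) (a : α) : Prop :=
  ∀ a' : α, lab s(Sum.inl a', Sum.inr b) ≤ lab s(Sum.inl a, Sum.inr b)

/-- The bi-clique is extremally matched: both the set `M⁻` of earliest edges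
and the set `M⁺` of latest edges form perfect matchings, i.e. the earliest-
(resp. latest-) neighbor maps of the two sides are mutually inverse. -/
def ExtremallyMatched (lab : Sym2 (α ⊕ β) → L) : Prop :=
  (∃ (f : α → β) (g : β → α),
    (∀ a, IsEarliestNbrA lab a (f a)) ∧ (∀ b, IsEarliestNbrB lab b (g b)) ∧
    (∀ a, g (f a) = a) ∧ (∀ b, f (g b) = b)) ∧
  (∃ (f : α → β) (g : β → α),
    (∀ a, IsLatestNbrA lab a (f a)) ∧ (∀ b, IsLatestNbrB lab b (g b)) ∧
    (∀ a, g (f a) = a) ∧ (∀ b, f (g b) = b))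

/-- `a ∈ A` is dismountable: there is `a' ≠ a` with
`λ({a, π⁻(a')}) ≤ λ({a', π⁻(a')})`. -/
def DismountableA (lab : Sym2 (α ⊕ β) → L) (a : α) : Prop :=
  ∃ (a' : α) (b : β), a' ≠ a ∧ IsEarliestNbrA lab a' b ∧
    lab s(Sum.inl a, Sum.inr b) ≤ lab s(Sum.inl a', Sum.inr b)

/-- `b ∈ B` is dismountable: there is `b' ≠ b` with
`λ({b', π⁺(b')}) ≤ λ({b, π⁺(b')})`. -/
def DismountableB (lab : Sym2 (α ⊕ β) → L) (b : β) : Prop :=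
  ∃ (b' : β) (a : α), b' ≠ b ∧ IsLatestNbrB lab b' a ∧
    lab s(Sum.inl a, Sum.inr b') ≤ lab s(Sum.inl a, Sum.inr b)

/-- The edge `{a', b'}` is `e`-reverted for `e = {a,b}`:
`λ({a', b}) ≤ λ({π⁺(b'), b})` or `λ({π⁻(a'), a}) ≤ λ({b', a})`. -/
def Reverted (lab : Sym2 (α ⊕ β) → L) (a : α) (b : β) (a' : α) (b' : β) : Prop :=
  (∃ a'' : α, IsLatestNbrB lab b' a'' ∧
    lab s(Sum.inl a', Sum.inr b) ≤ lab s(Sum.inl a'', Sum.inr b)) ∨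
  (∃ b'' : β, IsEarliestNbrA lab a' b'' ∧
    lab s(Sum.inl a, Sum.inr b'') ≤ lab s(Sum.inl a, Sum.inr b'))

/-- `M(e)`: the set of edges of the bi-clique that are *not* `e`-reverted,
for `e = {a,b}`. -/
def MSet (lab : Sym2 (α ⊕ β) → L) (a : α) (b : β) : Set (Sym2 (α ⊕ β)) :=
  {e | ∃ (a' : α) (b' : β), e = s(Sum.inl a', Sum.inr b') ∧ ¬ Reverted lab a b a' b'}

/-- `ind_{a}({a,b})`: the (1-based) rank of the edge `{a,b}` among the edges
incident to `a ∈ A`, ordered increasingly by label. -/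
def indA [Fintype β] (lab : Sym2 (α ⊕ β) → ℕ) (a : α) (b : β) : ℕ :=
  (Finset.univ.filter fun b' : β =>
    lab s(Sum.inl a, Sum.inr b') ≤ lab s(Sum.inl a, Sum.inr b)).card

/-- `ind_{b}({a,b})`: the (1-based) rank of the edge `{a,b}` among the edges
incident to `b ∈ B`, ordered increasingly by label. -/
def indB [Fintype α] (lab : Sym2 (α ⊕ β) → ℕ) (a : α) (b : β) : ℕ :=
  (Finset.univ.filter fun a' : α =>
    lab s(Sum.inl a', Sum.inr b) ≤ lab s(Sum.inl a, Sum.inr b)).card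

/-- Underlying symmetric label function of the shifted matching graph `SM_n`:
the edge `{a_i, b_j}` gets label `(j - i) mod n`. -/
def smFun (n : ℕ) : (Fin n ⊕ Fin n) → (Fin n ⊕ Fin n) → ℕ
  | Sum.inl i, Sum.inr j => (n + (j : ℕ) - (i : ℕ)) % n
  | Sum.inr j, Sum.inl i => (n + (j : ℕ) - (i : ℕ)) % n
  | _, _ => 0

theorem smFun_symm (n : ℕ) : ∀ x y, smFun n x y = smFun n y x := by
  rintro (i | i) (j | j) <;> rfl

/-- The labeling of the shifted matching graph `SM_n`. -/
def smLab (n : ℕ) : Sym2 (Fin n ⊕ Fin n) → ℕ :=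
  Sym2.lift ⟨smFun n, smFun_symm n⟩

end TS

/-!
Give the clique on `A ⊔ B` the following labels: edges inside `B` get `0`, an edge `{a, b}`
gets `λ({a, b}) + 1`, and edges inside `A` get a time `T + 1` later than every crossing edge.
Along a temporal path from `a ∈ A` to `b ∈ B` the labels lie between that of the first edge,
which contains `a` and is therefore at least `1`, and that of the last edge, which contains `b`
and is therefore at most `T`. So every edge of the path is a crossing edge, on which the new
labels are the old ones shifted by `1`: the path is a temporal path of the bi-clique.
-/

namespace TS

section TemporalPath

variable {V L : Type} [LinearOrder L] {lab : Sym2 V → L} {S : Set (Sym2 V)}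

theorem pathEdges_cons_cons (u w : V) (l : List V) :
    pathEdges (u :: w :: l) = s(u, w) :: pathEdges (w :: l) := rfl

theorem pathEdges_append_pair (l : List V) (w v : V) :
    pathEdges (l ++ [w, v]) = pathEdges (l ++ [w]) ++ [s(w, v)] := by
  induction l with
  | nil => rfl
  | cons x l ih =>
    cases l with
    | nil => rfl
    | cons y l => simp only [List.cons_append, pathEdges_cons_cons] at ih ⊢; rw [ih]

theorem IsTemporalPath.pairwise {p : List V} (hp : IsTemporalPath lab S p) :
    (pathEdges p).Pairwise fun e f => lab e ≤ lab f :=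
  List.pairwise_map.mp ((List.isChain_map lab).mpr hp.2.2).pairwise

theorem IsTemporalPath.exists_label_bounds {p : List V} {u v : V}
    (hp : IsTemporalPath lab S p) (hu : p.head? = some u) (hv : p.getLast? = some v)
    (huv : u ≠ v) :
    ∃ w w', ∀ e ∈ pathEdges p, lab s(u, w) ≤ lab e ∧ lab e ≤ lab s(w', v) := by
  obtain ⟨l, rfl⟩ := List.head?_eq_some_iff.mp hu
  obtain ⟨l', hl'⟩ := List.getLast?_eq_some_iff.mp hv
  obtain ⟨w, l, rfl⟩ : ∃ w l₀, l = w :: l₀ := by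
    cases l with
    | nil => exact absurd (by simpa using hv) huv
    | cons w l₀ => exact ⟨w, l₀, rfl⟩
  obtain ⟨l', w', rfl⟩ : ∃ l₀ w', l' = l₀ ++ [w'] := by
    rcases List.eq_nil_or_concat l' with rfl | ⟨l₀, w', rfl⟩
    · simp at hl'
    · exact ⟨l₀, w', List.concat_eq_append ..⟩
  have hpw := hp.pairwise
  refine ⟨w, w', fun e he => ⟨?_, ?_⟩⟩
  · rw [pathEdges_cons_cons] at hpw he
    rcases List.mem_cons.mp he with rfl | he
    · exact le_rfl
    · exact List.rel_of_pairwise_cons hpw he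
  · rw [hl', List.append_assoc, List.singleton_append, pathEdges_append_pair] at hpw he
    rcases List.mem_append.mp he with he | he
    · exact List.pairwise_append.mp hpw |>.2.2 e he _ (List.mem_singleton_self _)
    · rw [List.mem_singleton.mp he]

end TemporalPath

section Completion

variable {α β : Type} (lab : Sym2 (α ⊕ β) → ℕ) (T : ℕ)

def completionFun : α ⊕ β → α ⊕ β → ℕ
  | Sum.inl _, Sum.inl _ => T + 1
  | Sum.inr _, Sum.inr _ => 0
  | x, y => lab s(x, y) + 1

theorem completionFun_comm : ∀ x y, completionFun lab T x y = completionFun lab T y x := by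
  rintro (a | b) (a' | b') <;> simp [completionFun, Sym2.eq_swap]

def completionLab : Sym2 (α ⊕ β) → ℕ :=
  Sym2.lift ⟨completionFun lab T, completionFun_comm lab T⟩

theorem completionLab_inl_inr (a : α) (b : β) :
    completionLab lab T s(Sum.inl a, Sum.inr b) = lab s(Sum.inl a, Sum.inr b) + 1 := rfl

variable {lab T}

theorem one_le_completionLab_inl (a : α) (w : α ⊕ β) :
    1 ≤ completionLab lab T s(Sum.inl a, w) := by
  rcases w with a' | b <;> simp [completionLab, completionFun]

theorem completionLab_le_inr (hT : ∀ a b, lab s(Sum.inl a, Sum.inr b) < T)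
    (w : α ⊕ β) (b : β) : completionLab lab T s(w, Sum.inr b) ≤ T := by
  rcases w with a | b'
  · exact hT a b
  · simp [completionLab, completionFun]

theorem mem_bicliqueEdges_of_completionLab {e : Sym2 (α ⊕ β)}
    (h₁ : 1 ≤ completionLab lab T e) (h₂ : completionLab lab T e ≤ T) :
    e ∈ bicliqueEdges α β := by
  induction e using Sym2.ind with
  | _ x y =>
    rcases x with a | b <;> rcases y with a' | b'
    · simp [completionLab, completionFun] at h₂
    · exact ⟨a, b', rfl⟩
    · exact ⟨a', b, Sym2.eq_swap⟩
    · simp [completionLab, completionFun] at h₁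

theorem Reaches.of_completionLab (hT : ∀ a b, lab s(Sum.inl a, Sum.inr b) < T)
    {S : Set (Sym2 (α ⊕ β))} {a : α} {b : β}
    (h : Reaches (completionLab lab T) S (Sum.inl a) (Sum.inr b)) :
    Reaches lab (S ∩ bicliqueEdges α β) (Sum.inl a) (Sum.inr b) := by
  obtain ⟨p, hu, hv, hp⟩ := h
  obtain ⟨w, w', hbounds⟩ := hp.exists_label_bounds hu hv Sum.inl_ne_inr
  have hcross : ∀ e ∈ pathEdges p, e ∈ bicliqueEdges α β := fun e he =>
    mem_bicliqueEdges_of_completionLab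
      ((one_le_completionLab_inl a w).trans (hbounds e he).1)
      ((hbounds e he).2.trans (completionLab_le_inr hT w' b))
  refine ⟨p, hu, hv, hp.1, fun e he => ⟨hp.2.1 e he, hcross e he⟩, ?_⟩
  refine hp.2.2.imp_of_mem_imp fun e f he hf hef => ?_
  obtain ⟨a₁, b₁, rfl⟩ := hcross e he
  obtain ⟨a₂, b₂, rfl⟩ := hcross f hf
  simpa only [completionLab_inl_inr, Nat.add_le_add_iff_right] using hef

theorem exists_forall_lab_inl_inr_lt [Finite α] [Finite β] (lab : Sym2 (α ⊕ β) → ℕ) :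
    ∃ T, ∀ a b, lab s(Sum.inl a, Sum.inr b) < T := by
  obtain ⟨T, hT⟩ :=
    (Set.finite_range fun ab : α × β => lab s(Sum.inl ab.1, Sum.inr ab.2)).bddAbove
  exact ⟨T + 1, fun a b => Nat.lt_succ_of_le (hT ⟨(a, b), rfl⟩)⟩

end Completion

theorem stmt3_general {α β : Type} [Fintype α] [Fintype β]
    (lab : Sym2 (α ⊕ β) → ℕ) :
    ∃ lab' : Sym2 (α ⊕ β) → ℕ,
      ∀ S : Set (Sym2 (α ⊕ β)), IsSpanner lab' (cliqueEdges (α ⊕ β)) S →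
        IsBiSpanner lab (S ∩ bicliqueEdges α β) := by
  obtain ⟨T, hT⟩ := exists_forall_lab_inl_inr_lt lab
  exact ⟨completionLab lab T, fun S hS =>
    ⟨Set.inter_subset_right, fun a b => (hS.2 (Sum.inl a) (Sum.inr b)).of_completionLab hT⟩⟩

/-- for a temporal bi-clique `D = (A,B,λ)` with `|A| = |B|`,
there is a temporal clique `C` on `A ⊔ B` such that for every spanner `S`
of `C`, the set `S ∩ (A ⊗ B)` is a bi-spanner of `D`. -/
theorem stmt3 {α β : Type} [Fintype α] [Fintype β]
    (hcard : Fintype.card α = Fintype.card β) (lab : Sym2 (α ⊕ β) → ℕ) :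
    ∃ lab' : Sym2 (α ⊕ β) → ℕ,
      ∀ S : Set (Sym2 (α ⊕ β)), IsSpanner lab' (cliqueEdges (α ⊕ β)) S →
        IsBiSpanner lab (S ∩ bicliqueEdges α β) :=
  stmt3_general lab

end TS
end

section
/- For all positive natural numbers k and n, the worst-case bi-spanner sizes satisfy σ_bc(kn) ≤ k²·σ_bc(n). -/
/-!
A bi-clique with `k n` vertices on each side is the union of `k²` sub-bi-cliques with `n` vertices
on each side, one for every pair of blocks of a partition of both sides into `k` blocks of size `n`.
Every pair `(a, b)` lies in one of them, so the union of optimal bi-spanners of the `k²` induced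
sub-bi-cliques is a bi-spanner of the whole one.
-/

namespace TS

variable {V W : Type} {L : Type} [LinearOrder L]

lemma pathEdges_map (f : V → W) (p : List V) :
    pathEdges (p.map f) = (pathEdges p).map (Sym2.map f) := by
  simp [pathEdges, ← List.map_tail, List.zip_map, List.map_map, Function.comp_def]

lemma Reaches.mono {lab : Sym2 V → L} {S T : Set (Sym2 V)} {u v : V} (h : Reaches lab S u v)
    (hST : S ⊆ T) : Reaches lab T u v := by
  obtain ⟨p, hhead, hlast, hne, hS, hchain⟩ := h
  exact ⟨p, hhead, hlast, hne, fun e he => hST (hS e he), hchain⟩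

lemma Reaches.map (f : V → W) {lab : Sym2 W → L} {S : Set (Sym2 V)} {u v : V}
    (h : Reaches (lab ∘ Sym2.map f) S u v) : Reaches lab (Sym2.map f '' S) (f u) (f v) := by
  obtain ⟨p, hhead, hlast, hne, hS, hchain⟩ := h
  refine ⟨p.map f, by simp [hhead], by simp [hlast], by simpa using hne, ?_, ?_⟩
  · rw [pathEdges_map]
    rintro _ he
    obtain ⟨e, he', rfl⟩ := List.mem_map.1 he
    exact Set.mem_image_of_mem _ (hS e he')
  · rw [pathEdges_map]
    exact (List.isChain_map _).2 hchain

variable {α β α' β' : Type}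

lemma isBiSpanner_bicliqueEdges (lab : Sym2 (α ⊕ β) → L) :
    IsBiSpanner lab (bicliqueEdges α β) := by
  refine ⟨subset_rfl, fun a b =>
    ⟨[Sum.inl a, Sum.inr b], rfl, rfl, List.cons_ne_nil _ _, ?_, List.isChain_singleton _⟩⟩
  simp only [pathEdges, List.tail_cons, List.zip_cons_cons, List.zip_nil_right, List.map_cons,
    List.map_nil, List.mem_singleton, forall_eq]
  exact ⟨a, b, rfl⟩

lemma bicliqueEdges_image_sumMap (f : α → α') (g : β → β') {S : Set (Sym2 (α ⊕ β))}
    (hS : S ⊆ bicliqueEdges α β) :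
    Sym2.map (Sum.map f g) '' S ⊆ bicliqueEdges α' β' := by
  rintro _ ⟨e, he, rfl⟩
  obtain ⟨a, b, rfl⟩ := hS he
  exact ⟨f a, g b, rfl⟩

lemma exists_isBiSpanner_card_le_sigmaBc (n : ℕ) (lab : Sym2 (Fin n ⊕ Fin n) → ℕ) :
    ∃ S : Finset (Sym2 (Fin n ⊕ Fin n)), IsBiSpanner lab ↑S ∧ S.card ≤ sigmaBc n := by
  classical
  refine Nat.sInf_mem (s := {m | ∀ lab : Sym2 (Fin n ⊕ Fin n) → ℕ,
    ∃ S : Finset (Sym2 (Fin n ⊕ Fin n)), IsBiSpanner lab ↑S ∧ S.card ≤ m}) ?_ lab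
  refine ⟨(bicliqueEdges (Fin n) (Fin n)).toFinset.card, fun lab => ⟨_, ?_, le_rfl⟩⟩
  rw [Set.coe_toFinset]
  exact isBiSpanner_bicliqueEdges lab

lemma exists_isBiSpanner_of_blocks {ι κ : Type} [Fintype ι] [Fintype κ]
    (f : ι → α → α') (g : κ → β → β') (hf : ∀ a, ∃ i x, f i x = a) (hg : ∀ b, ∃ j y, g j y = b)
    {m : ℕ} (hm : ∀ lab : Sym2 (α ⊕ β) → L, ∃ S : Finset (Sym2 (α ⊕ β)),
      IsBiSpanner lab ↑S ∧ S.card ≤ m)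
    (lab : Sym2 (α' ⊕ β') → L) :
    ∃ T : Finset (Sym2 (α' ⊕ β')),
      IsBiSpanner lab ↑T ∧ T.card ≤ Fintype.card ι * Fintype.card κ * m := by
  classical
  let emb : ι × κ → α ⊕ β → α' ⊕ β' := fun ij => Sum.map (f ij.1) (g ij.2)
  choose S hS hcard using fun ij => hm (lab ∘ Sym2.map (emb ij))
  let block (ij : ι × κ) := (S ij).image (Sym2.map (emb ij))
  let T := Finset.univ.biUnion block
  have hT : ∀ ij, Sym2.map (emb ij) '' ↑(S ij) ⊆ ↑T := fun ij => by
    rw [← Finset.coe_image]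
    exact Finset.coe_subset.2 (Finset.subset_biUnion_of_mem block (Finset.mem_univ ij))
  refine ⟨T, ⟨?_, ?_⟩, ?_⟩
  · intro e he
    obtain ⟨ij, -, he⟩ := Finset.mem_biUnion.1 he
    exact bicliqueEdges_image_sumMap _ _ (hS ij).1 (by simpa [block] using he)
  · intro a b
    obtain ⟨i, x, rfl⟩ := hf a
    obtain ⟨j, y, rfl⟩ := hg b
    exact (Reaches.map (emb (i, j)) ((hS (i, j)).2 x y)).mono (hT (i, j))
  · calc T.card ≤ ∑ ij, (block ij).card := Finset.card_biUnion_le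
      _ ≤ ∑ _ij : ι × κ, m :=
        Finset.sum_le_sum fun ij _ => Finset.card_image_le.trans (hcard ij)
      _ = Fintype.card ι * Fintype.card κ * m := by simp

theorem stmt4_general (k n : ℕ) :
    sigmaBc (k * n) ≤ k ^ 2 * sigmaBc n := by
  apply Nat.sInf_le
  intro lab
  have hblock : ∀ a : Fin (k * n), ∃ i x, finProdFinEquiv (i, x) = a := fun a =>
    ⟨_, _, finProdFinEquiv.apply_symm_apply a⟩
  simpa [sq] using exists_isBiSpanner_of_blocks (fun i x => finProdFinEquiv (i, x))
    (fun j y => finProdFinEquiv (j, y)) hblock hblock (exists_isBiSpanner_card_le_sigmaBc n) lab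

/-- for all positive `k` and `n`, `σ_bc(kn) ≤ k²·σ_bc(n)`. -/
theorem stmt4 (k n : ℕ) (hk : 0 < k) (hn : 0 < n) :
    sigmaBc (k * n) ≤ k ^ 2 * sigmaBc n :=
  stmt4_general k n

end TS
end
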